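/- arXiv:2501.17513 — 3 statements merged into one kernel-verified Lean document; each statement's English description precedes it below -/
import Mathlib

section
/- Let K, d be positive natural numbers, μ ∈ (ℝ^d)^K with Pareto set P = p(μ), let U ⊆ P and φ^r : U → [d] with S(φ^r) ≠ ∅. Then there exists a map φ : P → [d] whose restriction to U equals φ^r and such that S(φ) ≠ ∅. -/
/-- Componentwise domination. -/
def Dominates {d : ℕ} (x y : Fin d → ℝ) : Prop := ∀ j, x j ≤ y j

/-- The Pareto set of `μ`. -/
def paretoSet {K d : ℕ} (μ : Fin K → Fin d → ℝ) : Set (Fin K) :=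
  {k | ∀ k', Dominates (μ k) (μ k') → Dominates (μ k') (μ k)}

/-- The cell of a map `φ` with (restricted) domain `U`. -/
def cellOn {K d : ℕ} (μ : Fin K → Fin d → ℝ) (U : Set (Fin K)) (φ : Fin K → Fin d) :
    Set (Fin d → ℝ) :=
  {lam0 | ∀ k ∈ U, ∀ j, μ k (φ k) - lam0 (φ k) ≤ μ k j - lam0 j}

/-- Any restricted map `φʳ : U → [d]` with a nonempty cell extends to a map
`φ : p(μ) → [d]` with a nonempty cell. -/
theorem valid_extension {K d : ℕ} (hK : 0 < K) (hd : 0 < d) (μ : Fin K → Fin d → ℝ)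
    (U : Set (Fin K)) (hU : U ⊆ paretoSet μ) (φr : Fin K → Fin d)
    (hne : cellOn μ U φr ≠ ∅) :
    ∃ φ : Fin K → Fin d, (∀ k ∈ U, φ k = φr k) ∧ cellOn μ (paretoSet μ) φ ≠ ∅ := by
  obtain ⟨lam0, hlam0⟩ := Set.nonempty_iff_ne_empty.2 hne
  have hmin : ∀ k : Fin K, ∃ j : Fin d, ∀ j' : Fin d,
      μ k j - lam0 j ≤ μ k j' - lam0 j' := by
    intro k
    obtain ⟨j, _, hj⟩ := Finset.exists_min_image Finset.univ
      (fun j => μ k j - lam0 j) ⟨⟨0, hd⟩, Finset.mem_univ _⟩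
    exact ⟨j, fun j' => hj j' (Finset.mem_univ _)⟩
  choose ψ hψ using hmin
  classical
  refine ⟨fun k => if k ∈ U then φr k else ψ k, fun k hk => by simp [hk], ?_⟩
  rw [← Set.nonempty_iff_ne_empty]
  refine ⟨lam0, fun k _ j => ?_⟩
  by_cases hk : k ∈ U
  · simpa [hk] using hlam0 k hk j
  · simpa [hk] using hψ k j
end

section
/- Let K, d be positive natural numbers, μ ∈ (ℝ^d)^K with Pareto set P = p(μ), and let φ, φ' : P → [d] be distinct maps with equal fiber cardinalities, i.e. |φ⁻¹(j)| = |φ'⁻¹(j)| for every j ∈ [d]. Then S(φ) and S(φ') cannot both have nonempty interior in ℝ^d. -/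
/-- The cell `S(φ)` of a map `φ : p(μ) → [d]`. -/
def cellP {K d : ℕ} (μ : Fin K → Fin d → ℝ)
    (φ : {k : Fin K // k ∈ paretoSet μ} → Fin d) : Set (Fin d → ℝ) :=
  {lam0 | ∀ k : {k : Fin K // k ∈ paretoSet μ}, ∀ j,
    μ k.1 (φ k) - lam0 (φ k) ≤ μ k.1 j - lam0 j}

/-- At an interior point of a cell the argmin is strict. -/
lemma interior_strict {K d : ℕ} (μ : Fin K → Fin d → ℝ)
    (φ : {k : Fin K // k ∈ paretoSet μ} → Fin d)
    {lam0 : Fin d → ℝ} (h : lam0 ∈ interior (cellP μ φ))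
    (k : {k : Fin K // k ∈ paretoSet μ}) {j : Fin d} (hj : j ≠ φ k) :
    μ k.1 (φ k) - lam0 (φ k) < μ k.1 j - lam0 j := by
  rcases Metric.isOpen_iff.mp isOpen_interior lam0 h with ⟨ε, hε, hball⟩
  set lam1 : Fin d → ℝ := Function.update lam0 (φ k) (lam0 (φ k) - ε / 2) with hlam1
  have h1 : lam1 ∈ cellP μ φ := by
    apply interior_subset
    apply hball
    rw [Metric.mem_ball]
    have : dist lam1 lam0 ≤ ε / 2 := by
      apply dist_pi_le_iff (by positivity) |>.2
      intro i
      by_cases hi : i = φ k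
      · subst hi
        simp only [hlam1, Function.update_self, Real.dist_eq]
        rw [show lam0 (φ k) - ε / 2 - lam0 (φ k) = -(ε / 2) by ring, abs_neg,
          abs_of_pos (half_pos hε)]
      · simp [hlam1, Function.update_of_ne hi, Real.dist_eq, le_of_lt (half_pos hε)]
    linarith
  have := h1 k j
  have e1 : lam1 (φ k) = lam0 (φ k) - ε / 2 := by simp [hlam1]
  have e2 : lam1 j = lam0 j := Function.update_of_ne hj _ _
  rw [e1, e2] at this
  linarith

/-- Two distinct maps `φ, φ' : p(μ) → [d]` with fibers of equal cardinality
cannot both have a cell with nonempty interior. -/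
theorem not_both_cells_nonempty_interior {K d : ℕ} (hK : 0 < K) (hd : 0 < d)
    (μ : Fin K → Fin d → ℝ)
    (φ φ' : {k : Fin K // k ∈ paretoSet μ} → Fin d) (hne : φ ≠ φ')
    (hcard : ∀ j : Fin d, {k | φ k = j}.ncard = {k | φ' k = j}.ncard) :
    ¬ ((interior (cellP μ φ)).Nonempty ∧ (interior (cellP μ φ')).Nonempty) := by
  classical
  rintro ⟨⟨lam0, h0⟩, ⟨lam1, h1⟩⟩
  set δ : Fin d → ℝ := fun j => lam1 j - lam0 j with hδ
  -- pointwise comparison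
  have key : ∀ k, δ (φ k) ≤ δ (φ' k) := by
    intro k
    by_cases hk : φ k = φ' k
    · rw [hk]
    · have a1 := interior_strict μ φ h0 k (Ne.symm hk)
      have a2 := interior_strict μ φ' h1 k hk
      simp only [hδ]
      linarith
  have keys : ∀ k, φ k ≠ φ' k → δ (φ k) < δ (φ' k) := by
    intro k hk
    have a1 := interior_strict μ φ h0 k (Ne.symm hk)
    have a2 := interior_strict μ φ' h1 k hk
    simp only [hδ]
    linarith
  obtain ⟨k₀, hk₀⟩ := Function.ne_iff.mp hne
  have hsumlt : ∑ k, δ (φ k) < ∑ k, δ (φ' k) :=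
    Finset.sum_lt_sum (fun k _ => key k) ⟨k₀, Finset.mem_univ _, keys k₀ hk₀⟩
  have hfib : ∀ (ψ : {k : Fin K // k ∈ paretoSet μ} → Fin d),
      ∑ k, δ (ψ k) = ∑ j : Fin d, ({k | ψ k = j}.ncard : ℝ) * δ j := by
    intro ψ
    rw [← Finset.sum_fiberwise Finset.univ ψ (fun k => δ (ψ k))]
    refine Finset.sum_congr rfl fun j _ => ?_
    rw [Finset.sum_congr rfl (fun k hk => by
      rw [(Finset.mem_filter.mp hk).2]), Finset.sum_const, nsmul_eq_mul]
    congr 2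
    rw [Set.ncard_eq_toFinset_card']
    congr 1
    ext k
    simp
  have := hfib φ
  rw [hfib φ'] at hsumlt
  rw [this] at hsumlt
  simp only [hcard] at hsumlt
  exact lt_irrefl _ hsumlt
end

section
/- Let K, d be positive natural numbers and μ ∈ (ℝ^d)^K with Pareto set P = p(μ) of cardinality p. Then the number of maps φ : P → [d] whose cell S(φ) has nonempty interior in ℝ^d is at most the binomial coefficient C(p + d − 1, d − 1). -/
/-- In the interior of a cell, the argmin is strict. -/
lemma strict_of_interior {K d : ℕ} (μ : Fin K → Fin d → ℝ)
    (φ : {k : Fin K // k ∈ paretoSet μ} → Fin d)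
    {lam : Fin d → ℝ} (h : lam ∈ interior (cellP μ φ))
    (k : {k : Fin K // k ∈ paretoSet μ}) {j : Fin d} (hj : j ≠ φ k) :
    μ k.1 (φ k) - lam (φ k) < μ k.1 j - lam j := by
  rw [mem_interior_iff_mem_nhds, Metric.mem_nhds_iff] at h
  obtain ⟨ε, hε, hball⟩ := h
  set lam' := Function.update lam j (lam j + ε / 2) with hl
  have hmem : lam' ∈ cellP μ φ := by
    apply hball
    rw [Metric.mem_ball, dist_pi_lt_iff hε]
    intro i
    by_cases hi : i = j
    · subst hi
      simp only [hl, Function.update_self, Real.dist_eq]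
      rw [show lam i + ε / 2 - lam i = ε / 2 by ring, abs_of_pos (by linarith)]
      linarith
    · simp [hl, Function.update_of_ne hi, hε]
  have h1 : lam' (φ k) = lam (φ k) := Function.update_of_ne (Ne.symm hj) _ _
  have h2 : lam' j = lam j + ε / 2 := Function.update_self _ _ _
  have := hmem k j
  rw [h1, h2] at this
  linarith

/-- Counting cells: the number of maps `φ : p(μ) → [d]` whose cell has
nonempty interior is at most `C(p + d − 1, d − 1)` where `p = |p(μ)|`. -/
theorem count_cells_le {K d : ℕ} (hK : 0 < K) (hd : 0 < d)
    (μ : Fin K → Fin d → ℝ) :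
    {φ : {k : Fin K // k ∈ paretoSet μ} → Fin d |
        (interior (cellP μ φ)).Nonempty}.ncard
      ≤ Nat.choose ((paretoSet μ).ncard + d - 1) (d - 1) := by
  classical
  set A := {k : Fin K // k ∈ paretoSet μ}
  letI : Fintype A := Fintype.ofFinite A
  set p := (paretoSet μ).ncard with hp
  have hcardA : Fintype.card A = p := by
    rw [← Nat.card_eq_fintype_card, hp, Nat.card_coe_set_eq]
  -- the injection into multisets
  have hcard : ∀ φ : A → Fin d,
      Multiset.card ((Finset.univ : Finset A).val.map φ) = p := by
    intro φ
    rw [Multiset.card_map, ← Finset.card_def, Finset.card_univ, hcardA]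
  set f : (A → Fin d) → Sym (Fin d) p := fun φ => ⟨_, hcard φ⟩ with hf
  have hinj : Set.InjOn f {φ : A → Fin d | (interior (cellP μ φ)).Nonempty} := by
    intro φ hφ ψ hψ heq
    obtain ⟨lam, hlam⟩ := hφ
    obtain ⟨lam', hlam'⟩ := hψ
    set δ : Fin d → ℝ := fun j => lam j - lam' j with hδ
    have key : ∀ k : A, φ k ≠ ψ k → δ (ψ k) < δ (φ k) := by
      intro k hk
      have h1 := strict_of_interior μ φ hlam k (Ne.symm hk)
      have h2 := strict_of_interior μ ψ hlam' k hk
      simp only [hδ]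
      linarith
    have hsum : ∑ k : A, δ (φ k) = ∑ k : A, δ (ψ k) := by
      have hm : (Finset.univ : Finset A).val.map φ =
          (Finset.univ : Finset A).val.map ψ := congrArg Subtype.val heq
      have e1 : ∑ k : A, δ (φ k) =
          (((Finset.univ : Finset A).val.map φ).map δ).sum := by
        rw [Multiset.map_map]; rfl
      have e2 : ∑ k : A, δ (ψ k) =
          (((Finset.univ : Finset A).val.map ψ).map δ).sum := by
        rw [Multiset.map_map]; rfl
      rw [e1, e2, hm]
    funext k
    by_contra hk
    have hlt : ∑ k : A, δ (ψ k) < ∑ k : A, δ (φ k) := by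
      apply Finset.sum_lt_sum
      · intro i _
        by_cases hi : φ i = ψ i
        · rw [hi]
        · exact (key i hi).le
      · exact ⟨k, Finset.mem_univ k, key k hk⟩
    linarith
  have hle : {φ : A → Fin d | (interior (cellP μ φ)).Nonempty}.ncard
      ≤ (Set.univ : Set (Sym (Fin d) p)).ncard :=
    Set.ncard_le_ncard_of_injOn f (fun a _ => Set.mem_univ _) hinj Set.finite_univ
  have hsym : (Set.univ : Set (Sym (Fin d) p)).ncard = Nat.choose (d + p - 1) p := by
    rw [Set.ncard_univ, Nat.card_eq_fintype_card, Sym.card_sym_eq_choose,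
      Fintype.card_fin]
  have hchoose : Nat.choose (d + p - 1) p = Nat.choose (p + d - 1) (d - 1) := by
    rw [show d + p - 1 = p + d - 1 by omega,
      show d - 1 = (p + d - 1) - p by omega, Nat.choose_symm (by omega)]
  calc {φ : A → Fin d | (interior (cellP μ φ)).Nonempty}.ncard
      ≤ (Set.univ : Set (Sym (Fin d) p)).ncard := hle
    _ = Nat.choose (p + d - 1) (d - 1) := by rw [hsym, hchoose]
end
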